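/- arXiv:1508.00945 — 4 statements merged into one kernel-verified Lean document; each statement's English description precedes it below -/
import Mathlib

section
/- Let Δ be a random vector in R^k and w ∈ R^k a constant vector. Define μ(z) = z/‖z‖₁ if z ≠ 0 and μ(0) = 0. If ⟨E[μ(Δ)], w⟩ ≤ 1/2, then P[‖Δ‖₁ - ⟨Δ, w⟩ < 0] ≤ exp(-1/(32‖w‖₂²)). -/
/-!
Since `⟪μ(z), w⟫ ≤ ‖μ(z)‖₂ ‖w‖₂ ≤ ‖w‖₂` and `‖Δ‖₁ < ⟪Δ, w⟫` forces `1 < ⟪μ(Δ), w⟫`, the event is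
empty when `‖w‖₂ ≤ 1`. Otherwise Markov's inequality for the nonnegative variable
`⟪μ(Δ), w⟫ + ‖w‖₂` bounds its probability by `(1/2 + ‖w‖₂) / (1 + ‖w‖₂) = 1 - 1 / (2 (1 + ‖w‖₂))`,
which is at most `1 - 1 / (32 ‖w‖₂²) ≤ exp (-1 / (32 ‖w‖₂²))`.
-/

open scoped BigOperators RealInnerProductSpace
open MeasureTheory Classical

/-- μ(z) = z/‖z‖₁ if z ≠ 0, else 0. -/
noncomputable def muNorm {k : ℕ} (z : EuclideanSpace ℝ (Fin k)) : EuclideanSpace ℝ (Fin k) :=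
  if z = 0 then 0 else (∑ i, |z i|)⁻¹ • z

lemma EuclideanSpace.norm_le_sum_abs {ι : Type*} [Fintype ι] (z : EuclideanSpace ℝ ι) :
    ‖z‖ ≤ ∑ i, |z i| := by
  rw [EuclideanSpace.norm_eq, Real.sqrt_le_left (by positivity)]
  simpa only [Real.norm_eq_abs] using
    Finset.sum_sq_le_sq_sum_of_nonneg fun i _ => abs_nonneg (z i)

section muNorm

variable {k : ℕ}

lemma norm_muNorm_le_one (z : EuclideanSpace ℝ (Fin k)) : ‖muNorm z‖ ≤ 1 := by
  unfold muNorm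
  split_ifs with hz
  · simp
  · have hs : 0 < ∑ i, |z i| := (norm_pos_iff.2 hz).trans_le z.norm_le_sum_abs
    rw [norm_smul, Real.norm_of_nonneg (inv_nonneg.2 hs.le), inv_mul_le_one₀ hs]
    exact z.norm_le_sum_abs

lemma measurable_muNorm : Measurable (muNorm : EuclideanSpace ℝ (Fin k) → _) := by
  have hsum : Continuous fun z : EuclideanSpace ℝ (Fin k) => ∑ i, |z i| := by fun_prop
  exact Measurable.ite measurableSet_eq measurable_const (hsum.measurable.inv.smul measurable_id)

lemma one_lt_inner_muNorm {z w : EuclideanSpace ℝ (Fin k)} (h : ∑ i, |z i| < ⟪z, w⟫) :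
    1 < ⟪muNorm z, w⟫ := by
  have hz : z ≠ 0 := by
    rintro rfl
    simp at h
  have hs : 0 < ∑ i, |z i| := (norm_pos_iff.2 hz).trans_le z.norm_le_sum_abs
  rwa [muNorm, if_neg hz, real_inner_smul_left, one_lt_inv_mul₀ hs]

lemma abs_inner_muNorm_le (z w : EuclideanSpace ℝ (Fin k)) : |⟪muNorm z, w⟫| ≤ ‖w‖ :=
  (abs_real_inner_le_norm _ _).trans
    (mul_le_of_le_one_left (norm_nonneg w) (norm_muNorm_le_one z))

end muNorm

/-- Markov's inequality applied to `X + c`. -/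
lemma measureReal_le_le_div_of_neg_le {Ω : Type*} [MeasurableSpace Ω] {P : Measure Ω}
    [IsProbabilityMeasure P] {X : Ω → ℝ} {a c : ℝ} (hX : Integrable X P)
    (hlow : ∀ᵐ ω ∂P, -c ≤ X ω) (hac : 0 < a + c) :
    P.real {ω | a ≤ X ω} ≤ (∫ ω, X ω ∂P + c) / (a + c) := by
  have hmarkov := mul_meas_ge_le_integral_of_nonneg (f := fun ω => X ω + c)
    (hlow.mono fun ω h => by simp only [Pi.zero_apply]; linarith) (hX.add (integrable_const c))
    (a + c)
  simp only [add_le_add_iff_right] at hmarkov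
  rw [integral_add hX (integrable_const c), integral_const, probReal_univ, one_smul] at hmarkov
  rwa [le_div_iff₀ hac, mul_comm]

lemma half_add_div_one_add_le_exp {c : ℝ} (hc : 1 ≤ c) :
    (1 / 2 + c) / (1 + c) ≤ Real.exp (-1 / (32 * c ^ 2)) := by
  have h1c : 0 < 1 + c := by linarith
  calc (1 / 2 + c) / (1 + c) = 1 - 1 / (2 * (1 + c)) := by field_simp; ring
    _ ≤ 1 - 1 / (32 * c ^ 2) := by
        gcongr 1 - ?_
        exact one_div_le_one_div_of_le (by positivity) (by nlinarith)
    _ ≤ Real.exp (-1 / (32 * c ^ 2)) := by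
        have := Real.add_one_le_exp (-1 / (32 * c ^ 2))
        rw [neg_div] at this ⊢
        linarith

/-- If ⟨E[μ(Δ)], w⟩ ≤ 1/2 then P[‖Δ‖₁ - ⟨Δ,w⟩ < 0] ≤ exp(-1/(32‖w‖₂²)). -/
theorem stmt_0 {k : ℕ} {Ω : Type*} [MeasurableSpace Ω] (P : Measure Ω) [IsProbabilityMeasure P]
    (Δ : Ω → EuclideanSpace ℝ (Fin k)) (hΔ : Measurable Δ)
    (w : EuclideanSpace ℝ (Fin k))
    (hmean : ⟪∫ ω, muNorm (Δ ω) ∂P, w⟫ ≤ 1 / 2) :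
    P {ω | (∑ i, |Δ ω i|) - ⟪Δ ω, w⟫ < 0} ≤ ENNReal.ofReal (Real.exp (-1 / (32 * ‖w‖ ^ 2))) := by
  set X : Ω → ℝ := fun ω => ⟪muNorm (Δ ω), w⟫
  have hevent : {ω | (∑ i, |Δ ω i|) - ⟪Δ ω, w⟫ < 0} ⊆ {ω | 1 < X ω} :=
    fun ω hω => one_lt_inner_muNorm (sub_neg.1 hω)
  rcases le_or_gt ‖w‖ 1 with hw | hw
  · have hempty : {ω | 1 < X ω} = ∅ := Set.eq_empty_of_forall_notMem fun ω hω =>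
      (hω.trans_le ((le_abs_self _).trans (abs_inner_muNorm_le _ w))).not_ge hw
    calc _ ≤ P {ω | 1 < X ω} := measure_mono hevent
      _ = 0 := by rw [hempty, measure_empty]
      _ ≤ _ := zero_le
  have hμ : Integrable (fun ω => muNorm (Δ ω)) P :=
    .of_bound (measurable_muNorm.comp hΔ).aestronglyMeasurable 1
      (ae_of_all _ fun ω => norm_muNorm_le_one _)
  have hEX : ∫ ω, X ω ∂P = ⟪∫ ω, muNorm (Δ ω) ∂P, w⟫ := by
    simp only [X, real_inner_comm w, integral_inner hμ]
  have hmarkov : P.real {ω | 1 ≤ X ω} ≤ (1 / 2 + ‖w‖) / (1 + ‖w‖) := by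
    refine (measureReal_le_le_div_of_neg_le (hμ.inner_const w)
      (ae_of_all _ fun ω => neg_le_of_abs_le (abs_inner_muNorm_le _ w)) (by positivity)).trans ?_
    gcongr
    exact hEX ▸ hmean
  calc _ ≤ P {ω | 1 ≤ X ω} :=
        measure_mono (hevent.trans (Set.ofPred_subset_ofPred.2 fun _ => le_of_lt))
    _ = ENNReal.ofReal (P.real {ω | 1 ≤ X ω}) := (ofReal_measureReal (measure_ne_top _ _)).symm
    _ ≤ _ := ENNReal.ofReal_le_ofReal (hmarkov.trans (half_add_div_one_add_le_exp hw.le))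
end

section
/- For integers v and b with 2 ≤ b ≤ v-2, the following inequality holds: (1/b) · ((C(b+1,b)-1)/C(b+1,b)) · ∏_{i=b+3}^{v} ((C(i-1,b)-1)/C(i-1,b)) ≥ 1 - (b²+2b+2)/(b²+3b+2). -/
/-!
Since `z ↦ (z - 1) / z` is increasing and `C(n, 2) ≤ C(n, b)` for `b + 2 ≤ n`, the product is at
least `∏_{n=b+2}^{v-1} (C(n,2) - 1) / C(n,2) = ∏ (n-2)(n+1) / (n(n-1))`, which telescopes to
`b v / ((b + 2)(v - 2)) ≥ b / (b + 2)`. The first two factors equal `1 / (b + 1)`, and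
`b / ((b + 1)(b + 2))` is exactly the right-hand side.
-/

theorem Nat.choose_le_choose_of_le_of_le_half {n j k : ℕ} (hjk : j ≤ k) (hk : k ≤ n / 2) :
    n.choose j ≤ n.choose k := by
  induction k, hjk using Nat.le_induction with
  | base => rfl
  | succ k _ ih => exact (ih (by omega)).trans (Nat.choose_le_succ_of_lt_half_left (by omega))

theorem Nat.choose_le_choose_of_le_of_le_sub {n j k : ℕ} (hjk : j ≤ k) (hkn : k ≤ n - j) :
    n.choose j ≤ n.choose k := by
  rcases le_or_gt k (n / 2) with hk | hk
  · exact Nat.choose_le_choose_of_le_of_le_half hjk hk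
  · rw [← Nat.choose_symm (by omega : k ≤ n)]
    exact Nat.choose_le_choose_of_le_of_le_half (by omega) (by omega)

section OrderedField

variable {K : Type*} [Field K] [LinearOrder K] [IsStrictOrderedRing K]

theorem sub_one_div_self_le_sub_one_div_self {x y : K} (hx : 0 < x) (hxy : x ≤ y) :
    (x - 1) / x ≤ (y - 1) / y := by
  rw [sub_div, sub_div, div_self hx.ne', div_self (hx.trans_le hxy).ne']
  exact sub_le_sub_left (one_div_le_one_div_of_le hx hxy) 1

theorem cast_choose_two_sub_one_div {n : ℕ} (hn : 2 ≤ n) :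
    ((n.choose 2 : K) - 1) / n.choose 2 = ((n : K) - 2) * (n + 1) / (n * (n - 1)) := by
  have hn' : (2 : K) ≤ n := by exact_mod_cast hn
  have h0 : (n : K) ≠ 0 := by positivity
  have h1 : (n : K) - 1 ≠ 0 := by linarith
  rw [Nat.cast_choose_two]
  field_simp
  ring

/-- The factors `(n - 2) / (n - 1)` and `(n + 1) / n` telescope separately. -/
theorem prod_Icc_cast_choose_two_sub_one_div {a v : ℕ} (ha : 3 ≤ a) (hav : a ≤ v) :
    ∏ i ∈ Finset.Icc (a + 1) v, (((i - 1).choose 2 : K) - 1) / ((i - 1).choose 2 : K) =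
      ((a : K) - 2) * v / (a * (v - 2)) := by
  have ha' : (3 : K) ≤ a := by exact_mod_cast ha
  induction v, hav using Nat.le_induction with
  | base =>
    rw [Finset.Icc_eq_empty (by omega), Finset.prod_empty, eq_comm, div_eq_one_iff_eq]
    · ring
    · exact mul_ne_zero (by positivity) (by linarith)
  | succ v hav ih =>
    have hv : (3 : K) ≤ v := ha'.trans (by exact_mod_cast hav)
    rw [Finset.prod_Icc_succ_top (by omega), ih, Nat.add_sub_cancel,
      cast_choose_two_sub_one_div (by omega)]
    have : (v : K) - 2 ≠ 0 := by linarith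
    have : (v : K) - 1 ≠ 0 := by linarith
    have : (v : K) ≠ 0 := by positivity
    have : (a : K) ≠ 0 := by positivity
    push_cast
    rw [show (v : K) + 1 - 2 = v - 1 by ring]
    field_simp

theorem div_add_two_le_prod_Icc_cast_choose_sub_one_div {b v : ℕ} (hb : 2 ≤ b)
    (hbv : b + 2 ≤ v) :
    (b : K) / (b + 2) ≤
      ∏ i ∈ Finset.Icc (b + 3) v, (((i - 1).choose b : K) - 1) / ((i - 1).choose b : K) := by
  have hv : (b : K) + 2 ≤ v := by exact_mod_cast hbv
  have hb' : (2 : K) ≤ b := by exact_mod_cast hb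
  calc (b : K) / (b + 2) ≤ b * v / ((b + 2) * (v - 2)) := by
        rw [div_le_div_iff₀ (by positivity) (by nlinarith)]
        nlinarith
    _ = ∏ i ∈ Finset.Icc (b + 3) v, (((i - 1).choose 2 : K) - 1) / ((i - 1).choose 2 : K) := by
        rw [prod_Icc_cast_choose_two_sub_one_div (a := b + 2) (by omega) hbv]
        push_cast
        ring_nf
    _ ≤ _ := by
        refine Finset.prod_le_prod (fun i hi => ?_) (fun i hi => ?_)
        · have hi2 : 2 ≤ i - 1 := by simp at hi; omega
          have : (1 : K) ≤ (i - 1).choose 2 := by exact_mod_cast Nat.choose_pos hi2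
          exact div_nonneg (by linarith) (by linarith)
        · have hib : b + 2 ≤ i - 1 := by simp at hi; omega
          exact sub_one_div_self_le_sub_one_div_self (by exact_mod_cast Nat.choose_pos (by omega))
            (by exact_mod_cast Nat.choose_le_choose_of_le_of_le_sub hb (by omega))

end OrderedField

/-- For `2 ≤ b ≤ v - 2`:
`(1/b)·((C(b+1,b)-1)/C(b+1,b))·∏_{i=b+3}^{v} ((C(i-1,b)-1)/C(i-1,b))
   ≥ 1 - (b²+2b+2)/(b²+3b+2)`. -/
theorem stmt_8 (v b : ℕ) (hb : 2 ≤ b) (hbv : b + 2 ≤ v) :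
    (1 / (b : ℝ)) * (((Nat.choose (b + 1) b : ℝ) - 1) / (Nat.choose (b + 1) b : ℝ)) *
        ∏ i ∈ Finset.Icc (b + 3) v, (((Nat.choose (i - 1) b : ℝ) - 1) / (Nat.choose (i - 1) b : ℝ))
      ≥ 1 - ((b : ℝ) ^ 2 + 2 * b + 2) / ((b : ℝ) ^ 2 + 3 * b + 2) := by
  have hprod := div_add_two_le_prod_Icc_cast_choose_sub_one_div (K := ℝ) hb hbv
  have hfirst :
      1 / (b : ℝ) * ((((b + 1).choose b : ℝ) - 1) / ((b + 1).choose b : ℝ)) = 1 / (b + 1) := by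
    rw [Nat.choose_succ_self_right]
    push_cast
    field_simp
    ring
  rw [ge_iff_le, hfirst]
  calc 1 - ((b : ℝ) ^ 2 + 2 * b + 2) / ((b : ℝ) ^ 2 + 3 * b + 2)
        = 1 / (b + 1) * (b / (b + 2)) := by
        field_simp
        ring
    _ ≤ _ := by gcongr
end

section
/- For integers b, v with 1 ≤ b ≤ v/2: Σ_{i=0}^{b-1} C(v-b, i) ≤ (1/2)·C(v, b). -/
open scoped BigOperators

/-!
Write `b = n + 1` and `v - b = m + 1`. Termwise `C(m + 1, i) ≤ C(m + i, i)`, so by the hockey-stick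
identity the sum is at most `C(v - 1, b - 1)`; and `C(v, b) = (v / b) · C(v - 1, b - 1)` with
`v / b ≥ 2`.
-/

open Finset

namespace Nat

lemma choose_succ_le_add_choose (m i : ℕ) : (m + 1).choose i ≤ (i + m).choose m := by
  rw [← choose_symm_add]
  rcases i with _ | i
  · simp
  · exact choose_le_choose _ (by omega)

lemma sum_range_choose_le_choose_add (m n : ℕ) :
    ∑ i ∈ range (n + 1), (m + 1).choose i ≤ (n + m + 1).choose n :=
  calc ∑ i ∈ range (n + 1), (m + 1).choose i
      ≤ ∑ i ∈ range (n + 1), (i + m).choose m :=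
        sum_le_sum fun i _ => choose_succ_le_add_choose m i
    _ = (n + m + 1).choose (m + 1) := sum_range_add_choose n m
    _ = (n + m + 1).choose n := by rw [add_assoc, ← choose_symm_add]

lemma two_mul_choose_le_choose_succ {n k : ℕ} (h : 2 * (k + 1) ≤ n + 1) :
    2 * n.choose k ≤ (n + 1).choose (k + 1) := by
  refine le_of_mul_le_mul_right ?_ k.succ_pos
  calc 2 * n.choose k * (k + 1) = 2 * (k + 1) * n.choose k := by ring
    _ ≤ (n + 1) * n.choose k := Nat.mul_le_mul_right _ h
    _ = (n + 1).choose (k + 1) * (k + 1) := add_one_mul_choose_eq n k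

end Nat

theorem stmt_10_general (v b : ℕ) (hbv : 2 * b ≤ v) :
    2 * ∑ i ∈ Finset.range b, Nat.choose (v - b) i ≤ Nat.choose v b := by
  obtain _ | n := b
  · simp
  obtain ⟨m, rfl⟩ : ∃ m, v = n + 1 + (m + 1) := ⟨v - (n + 2), by omega⟩
  rw [Nat.add_sub_cancel_left]
  calc 2 * ∑ i ∈ range (n + 1), (m + 1).choose i
      ≤ 2 * (n + m + 1).choose n := Nat.mul_le_mul_left 2 (Nat.sum_range_choose_le_choose_add m n)
    _ ≤ (n + m + 1 + 1).choose (n + 1) := Nat.two_mul_choose_le_choose_succ (by omega)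
    _ = (n + 1 + (m + 1)).choose (n + 1) := by ring_nf

/-- For `1 ≤ b` and `2b ≤ v`: `Σ_{i=0}^{b-1} C(v-b, i) ≤ (1/2)·C(v, b)`. -/
theorem stmt_10 (v b : ℕ) (hb : 1 ≤ b) (hbv : 2 * b ≤ v) :
    2 * ∑ i ∈ Finset.range b, Nat.choose (v - b) i ≤ Nat.choose v b :=
  stmt_10_general v b hbv
end

section
/- Let φ: Y → R^k be a feature map on a finite set Y, let y, ŷ ∈ Y, let w ∈ R^k, α > 0, and ρ ∈ R^k. Define the margin m(y,y',u) = ⟨φ(y) - φ(y'), u⟩ and the Hamming distance H(y,y') = Σ_p |φ(y)_p - φ(y')_p|. If H(y,ŷ) - m(y,ŷ,w) < 0 and |ρ_p - αw_p| < α for every coordinate p with φ(y)_p ≠ φ(ŷ)_p, then m(y,ŷ,ρ) > 0, i.e., ⟨φ(y), ρ⟩ > ⟨φ(ŷ), ρ⟩. -/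
open scoped BigOperators

/-! Split `ρ = α w + (ρ - α w)`. Coordinatewise, `d_p ρ_p ≥ α d_p w_p - |d_p| |ρ_p - α w_p|
≥ α d_p w_p - α |d_p|` with `d = φ y - φ ŷ`, so summing gives
`m(y, ŷ, ρ) ≥ α (m(y, ŷ, w) - H(y, ŷ)) > 0`. -/

lemma mul_sub_mul_abs_le {d u r α : ℝ} (h : d ≠ 0 → |r - α * u| ≤ α) :
    α * (d * u) - α * |d| ≤ d * r := by
  rcases eq_or_ne d 0 with rfl | hd
  · simp
  have hdev : -(|d| * α) ≤ d * (r - α * u) := calc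
    -(|d| * α) ≤ -(|d| * |r - α * u|) :=
        neg_le_neg (mul_le_mul_of_nonneg_left (h hd) (abs_nonneg d))
    _ = -|d * (r - α * u)| := by rw [abs_mul]
    _ ≤ d * (r - α * u) := neg_abs_le _
  linarith

lemma mul_sum_sub_sum_abs_le_sum_mul {ι : Type*} (s : Finset ι) {d u r : ι → ℝ} {α : ℝ}
    (h : ∀ i, d i ≠ 0 → |r i - α * u i| ≤ α) :
    α * (∑ i ∈ s, d i * u i - ∑ i ∈ s, |d i|) ≤ ∑ i ∈ s, d i * r i := by
  rw [mul_sub, Finset.mul_sum, Finset.mul_sum, ← Finset.sum_sub_distrib]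
  exact Finset.sum_le_sum fun i _ => mul_sub_mul_abs_le (h i)

lemma sum_mul_pos_of_sum_abs_lt_sum_mul {ι : Type*} (s : Finset ι) {d u r : ι → ℝ} {α : ℝ}
    (hα : 0 < α) (hmargin : ∑ i ∈ s, |d i| < ∑ i ∈ s, d i * u i)
    (h : ∀ i, d i ≠ 0 → |r i - α * u i| ≤ α) :
    0 < ∑ i ∈ s, d i * r i :=
  (mul_pos hα (sub_pos.mpr hmargin)).trans_le (mul_sum_sub_sum_abs_le_sum_mul s h)

/-- Deterministic core of the Gaussian perturbation lemma: with margin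
`m(y,y',u) = Σ_p (φ(y)_p - φ(y')_p)·u_p` and Hamming distance
`H(y,y') = Σ_p |φ(y)_p - φ(y')_p|`, if `H(y,yh) - m(y,yh,w) < 0`, `α > 0`, and
`|ρ_p - α·w_p| < α` for every coordinate `p` with `φ(y)_p ≠ φ(yh)_p`,
then `⟨φ(y), ρ⟩ > ⟨φ(yh), ρ⟩`. -/
theorem stmt_14 {Y : Type*} {k : ℕ} (φ : Y → EuclideanSpace ℝ (Fin k))
    (y yh : Y) (w ρ : EuclideanSpace ℝ (Fin k)) (α : ℝ) (hα : 0 < α)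
    (hHm : (∑ p, |φ y p - φ yh p|) - (∑ p, (φ y p - φ yh p) * w p) < 0)
    (hρ : ∀ p, φ y p ≠ φ yh p → |ρ p - α * w p| < α) :
    ∑ p, φ yh p * ρ p < ∑ p, φ y p * ρ p := by
  have hpos : 0 < ∑ p, (φ y p - φ yh p) * ρ p :=
    sum_mul_pos_of_sum_abs_lt_sum_mul Finset.univ hα (sub_neg.mp hHm)
      fun p hp => (hρ p (sub_ne_zero.mp hp)).le
  simp only [sub_mul, Finset.sum_sub_distrib] at hpos
  linarith
end
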